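/- Let n ≥ 3 and let I be a nonempty proper subset of [n]. The (vertex) connectivity of the subgraph of the bubble-sort graph B_n induced by the union ∪_{i∈I} V_i equals n − 2, i.e., κ(B_n[∪_{i∈I} V_i]) = n − 2. -/

import Mathlib

open SimpleGraph

/-- The bubble-sort graph `B_n`: the Cayley graph on `Sym(n)` whose connection set is the set of
adjacent transpositions `[i, i+1]`, `1 ≤ i ≤ n-1`; `σ` and `τ` are adjacent iff
`τ = σ * [i, i+1]` for some `i`. -/
def bubbleSortGraph (n : ℕ) : SimpleGraph (Equiv.Perm (Fin n)) :=
  SimpleGraph.fromRel (fun σ τ => ∃ i j : Fin n, (j : ℕ) = (i : ℕ) + 1 ∧ τ = σ * Equiv.swap i j)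

/-- `T` is a family of internally disjoint trees connecting `S` in `G`: each `T i` is a tree
(as a subgraph of `G`) containing all vertices of `S`, the trees are pairwise edge disjoint, and
any two of them share exactly the vertices of `S`. -/
def InternallyDisjointTrees {V : Type*} (G : SimpleGraph V) (S : Set V) {ℓ : ℕ}
    (T : Fin ℓ → G.Subgraph) : Prop :=
  (∀ i, (T i).coe.IsTree ∧ S ⊆ (T i).verts) ∧
    Pairwise fun i j =>
      (T i).edgeSet ∩ (T j).edgeSet = ∅ ∧ (T i).verts ∩ (T j).verts = S

/-- `κ_G(S)`: the maximum number of internally disjoint trees connecting `S` in `G`. -/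
noncomputable def treeConnectivity {V : Type*} (G : SimpleGraph V) (S : Set V) : ℕ :=
  sSup {ℓ : ℕ | ∃ T : Fin ℓ → G.Subgraph, InternallyDisjointTrees G S T}

/-- The generalized `k`-connectivity `κ_k(G) = min {κ_G(S) : S ⊆ V(G), |S| = k}`. -/
noncomputable def generalizedConnectivity {V : Type*} (G : SimpleGraph V) (k : ℕ) : ℕ :=
  sInf {m : ℕ | ∃ S : Finset V, S.card = k ∧ m = treeConnectivity G ↑S}

/-- The vertex connectivity `κ(G)`: the minimum cardinality of a set `S` of vertices such that
`G - S` is disconnected or has at most one vertex. -/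
noncomputable def vertexConnectivity {V : Type*} (G : SimpleGraph V) : ℕ :=
  sInf {k : ℕ | ∃ S : Set V,
    S.ncard = k ∧ (¬ (G.induce Sᶜ).Connected ∨ Sᶜ.ncard ≤ 1)}

/-- `V_i`: the set of permutations `σ` of `[n]` with `σ(n) = i` (last entry equal to `i`). -/
def Vpart (n : ℕ) (hn : 0 < n) (i : Fin n) : Set (Equiv.Perm (Fin n)) :=
  {σ | σ ⟨n - 1, Nat.sub_lt hn Nat.one_pos⟩ = i}

namespace BSAux
open Equiv
variable {n : ℕ}

lemma perm_apply_inv_self {α : Type*} (σ : Equiv.Perm α) (x : α) : σ (σ⁻¹ x) = x :=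
  Equiv.apply_symm_apply σ x

lemma perm_inv_apply_self {α : Type*} (σ : Equiv.Perm α) (x : α) : σ⁻¹ (σ x) = x :=
  Equiv.symm_apply_apply σ x

lemma bs_adj_iff {σ τ : Equiv.Perm (Fin n)} :
    (bubbleSortGraph n).Adj σ τ ↔ σ ≠ τ ∧ ∃ i j : Fin n, (j:ℕ) = (i:ℕ) + 1 ∧ τ = σ * swap i j := by
  simp only [bubbleSortGraph, fromRel_adj]
  constructor
  · rintro ⟨hne, h | ⟨i, j, hij, h⟩⟩
    · exact ⟨hne, h⟩
    · exact ⟨hne, i, j, hij, by rw [h, mul_assoc, swap_mul_self, mul_one]⟩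
  · rintro ⟨hne, h⟩; exact ⟨hne, Or.inl h⟩

lemma bs_adj {i j : Fin n} (hij : (j:ℕ) = (i:ℕ) + 1) (σ : Equiv.Perm (Fin n)) :
    (bubbleSortGraph n).Adj σ (σ * swap i j) := by
  rw [bs_adj_iff]
  refine ⟨?_, i, j, hij, rfl⟩
  intro h
  have : swap i j = 1 := by
    have := congrArg (σ⁻¹ * ·) h
    simpa [mul_assoc] using this.symm
  rw [Equiv.swap_eq_one_iff] at this
  exact absurd (congrArg Fin.val this) (by omega)

/-- `Pfix n m σ0`: permutations agreeing with `σ0` at all positions `≥ m`. -/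
def Pfix (n m : ℕ) (σ0 : Equiv.Perm (Fin n)) : Set (Equiv.Perm (Fin n)) :=
  {σ | ∀ j : Fin n, m ≤ (j:ℕ) → σ j = σ0 j}

lemma self_mem_Pfix {m : ℕ} {σ0 : Equiv.Perm (Fin n)} : σ0 ∈ Pfix n m σ0 := fun _ _ => rfl

lemma mul_swap_mem_Pfix {m : ℕ} {σ : Equiv.Perm (Fin n)} {a b : Fin n}
    (ha : (a:ℕ) < m) (hb : (b:ℕ) < m) : σ * swap a b ∈ Pfix n m σ := by
  intro j hj
  have hja : j ≠ a := fun h => by subst h; omega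
  have hjb : j ≠ b := fun h => by subst h; omega
  simp [Equiv.Perm.mul_apply, Equiv.swap_apply_of_ne_of_ne hja hjb]

lemma inv_lt_of_agree {σ τ : Equiv.Perm (Fin n)} {m : ℕ}
    (h : ∀ j : Fin n, m ≤ (j:ℕ) → σ j = τ j) {j : Fin n} (hj : (j:ℕ) < m) :
    ((σ⁻¹ (τ j) : Fin n) : ℕ) < m := by
  by_contra hk
  push_neg at hk
  have h1 : σ (σ⁻¹ (τ j)) = τ (σ⁻¹ (τ j)) := h _ hk
  rw [perm_apply_inv_self _] at h1
  have := τ.injective h1.symm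
  have := congrArg Fin.val this
  omega


/-! ### Reachability within a vertex set -/

def ReachIn {V : Type*} (G : SimpleGraph V) (A : Set V) (u v : V) : Prop :=
  ∃ (hu : u ∈ A) (hv : v ∈ A), (G.induce A).Reachable ⟨u, hu⟩ ⟨v, hv⟩

namespace ReachIn
variable {V : Type*} {G : SimpleGraph V} {A B : Set V} {u v w : V}

lemma refl (h : u ∈ A) : ReachIn G A u u := ⟨h, h, by rfl⟩

lemma symm (h : ReachIn G A u v) : ReachIn G A v u := by
  obtain ⟨hu, hv, h⟩ := h; exact ⟨hv, hu, h.symm⟩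

lemma trans (h1 : ReachIn G A u v) (h2 : ReachIn G A v w) : ReachIn G A u w := by
  obtain ⟨hu, hv, h1⟩ := h1; obtain ⟨hv', hw, h2⟩ := h2
  exact ⟨hu, hw, h1.trans h2⟩

lemma mono (hAB : A ⊆ B) (h : ReachIn G A u v) : ReachIn G B u v := by
  obtain ⟨hu, hv, h⟩ := h
  exact ⟨hAB hu, hAB hv, h.map (G.induceHomOfLE hAB).toHom⟩

lemma of_adj (h : G.Adj u v) (hu : u ∈ A) (hv : v ∈ A) : ReachIn G A u v :=
  ⟨hu, hv, SimpleGraph.Adj.reachable (by exact h)⟩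

end ReachIn

lemma connected_induce_of_reachIn {V : Type*} {G : SimpleGraph V} {A : Set V}
    (hne : A.Nonempty) (h : ∀ u ∈ A, ∀ v ∈ A, ReachIn G A u v) : (G.induce A).Connected := by
  rw [SimpleGraph.connected_iff]
  refine ⟨?_, ⟨⟨hne.choose, hne.choose_spec⟩⟩⟩
  rintro ⟨x, hx⟩ ⟨y, hy⟩
  obtain ⟨hu, hv, hr⟩ := h x hx y hy
  exact hr

variable {n : ℕ}

/-- Two permutations agreeing on all positions `≥ 1` are equal. -/
lemma perm_eq_of_agree_one {σ τ : Equiv.Perm (Fin n)}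
    (h : ∀ j : Fin n, 1 ≤ (j:ℕ) → σ j = τ j) : σ = τ := by
  apply Equiv.ext; intro j
  rcases Nat.lt_or_ge (j:ℕ) 1 with hj | hj
  · have hk := inv_lt_of_agree h hj
    have h1 : σ (σ⁻¹ (τ j)) = τ j := perm_apply_inv_self σ _
    have hkj : σ⁻¹ (τ j) = j := Fin.ext (by omega)
    rw [hkj] at h1
    exact h1
  · exact h j hj

/-- Two permutations agreeing on all positions `≥ 2` are equal or differ by the swap `(0 1)`. -/
lemma perm_eq_or_swap {σ τ : Equiv.Perm (Fin n)} (h2 : 2 ≤ n)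
    (h : ∀ j : Fin n, 2 ≤ (j:ℕ) → σ j = τ j) :
    τ = σ ∨ τ = σ * swap ⟨0, by omega⟩ ⟨1, by omega⟩ := by
  set z0 : Fin n := ⟨0, by omega⟩ with hz0def
  set z1 : Fin n := ⟨1, by omega⟩ with hz1def
  have hval0 : (z0 : ℕ) = 0 := rfl
  have hval1 : (z1 : ℕ) = 1 := rfl
  have hk0 := inv_lt_of_agree h (j := z0) (by omega)
  have hk1 := inv_lt_of_agree h (j := z1) (by omega)
  have e0 : σ (σ⁻¹ (τ z0)) = τ z0 := perm_apply_inv_self σ _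
  have e1 : σ (σ⁻¹ (τ z1)) = τ z1 := perm_apply_inv_self σ _
  have hne : σ⁻¹ (τ z0) ≠ σ⁻¹ (τ z1) := by
    intro hc
    have h3 : τ z0 = τ z1 := by
      have := congrArg σ hc; rwa [e0, e1] at this
    have := congrArg Fin.val (τ.injective h3)
    omega
  have hj2 : ∀ j : Fin n, (j:ℕ) < 2 → j = z0 ∨ j = z1 := by
    intro j hj
    rcases Nat.lt_or_ge (j:ℕ) 1 with h' | h'
    · exact Or.inl (Fin.ext (by omega))
    · exact Or.inr (Fin.ext (by omega))
  have hnev : ((σ⁻¹ (τ z0) : Fin n) : ℕ) ≠ ((σ⁻¹ (τ z1) : Fin n) : ℕ) :=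
    fun hc => hne (Fin.ext hc)
  rcases Nat.lt_or_ge ((σ⁻¹ (τ z0) : Fin n) : ℕ) 1 with h0 | h0
  · -- τ z0 = σ z0, τ z1 = σ z1
    have hc0 : σ⁻¹ (τ z0) = z0 := Fin.ext (by omega)
    have hc1 : σ⁻¹ (τ z1) = z1 := Fin.ext (by omega)
    rw [hc0] at e0; rw [hc1] at e1
    left
    apply Equiv.ext; intro j
    rcases Nat.lt_or_ge (j:ℕ) 2 with hj | hj
    · rcases hj2 j hj with rfl | rfl
      · exact e0.symm
      · exact e1.symm
    · exact (h j hj).symm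
  · -- τ z0 = σ z1, τ z1 = σ z0
    have hc0 : σ⁻¹ (τ z0) = z1 := Fin.ext (by omega)
    have hc1 : σ⁻¹ (τ z1) = z0 := Fin.ext (by omega)
    rw [hc0] at e0; rw [hc1] at e1
    right
    apply Equiv.ext; intro j
    rcases Nat.lt_or_ge (j:ℕ) 2 with hj | hj
    · rcases hj2 j hj with rfl | rfl
      · rw [Equiv.Perm.mul_apply, Equiv.swap_apply_left]; exact e0.symm
      · rw [Equiv.Perm.mul_apply, Equiv.swap_apply_right]; exact e1.symm
    · rw [Equiv.Perm.mul_apply,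
        Equiv.swap_apply_of_ne_of_ne (fun hc => by rw [hc] at hj; omega)
          (fun hc => by rw [hc] at hj; omega)]
      exact (h j hj).symm

/-- A permutation in `Pfix n M σ0` with prescribed values `b` at position `M-1` and `c` at `M-2`. -/
def twoPoint (σ0 : Equiv.Perm (Fin n)) (p1 p2 b c : Fin n) : Equiv.Perm (Fin n) :=
  (σ0 * swap (σ0⁻¹ b) p1) * swap ((σ0 * swap (σ0⁻¹ b) p1)⁻¹ c) p2

lemma twoPoint_spec {σ0 : Equiv.Perm (Fin n)} {M : ℕ} {p1 p2 b c : Fin n}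
    (hM2 : 2 ≤ M) (hp1 : (p1:ℕ) = M - 1) (hp2 : (p2:ℕ) = M - 2)
    (hb : ((σ0⁻¹ b : Fin n) : ℕ) < M) (hc : ((σ0⁻¹ c : Fin n) : ℕ) < M) (hbc : b ≠ c) :
    twoPoint σ0 p1 p2 b c ∈ Pfix n M σ0 ∧
      twoPoint σ0 p1 p2 b c p1 = b ∧ twoPoint σ0 p1 p2 b c p2 = c := by
  set τ := σ0 * swap (σ0⁻¹ b) p1 with hτ
  have hτP : τ ∈ Pfix n M σ0 := mul_swap_mem_Pfix hb (by omega)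
  have hτp1 : τ p1 = b := by
    rw [hτ, Equiv.Perm.mul_apply, Equiv.swap_apply_right, perm_apply_inv_self _]
  have hinvc : ((τ⁻¹ c : Fin n) : ℕ) < M := by
    have := inv_lt_of_agree (σ := τ) (τ := σ0) (m := M)
      (fun j hj => (hτP j hj)) (j := σ0⁻¹ c) hc
    rwa [perm_apply_inv_self _] at this
  have hinvcne : τ⁻¹ c ≠ p1 := by
    intro hcp
    have : τ (τ⁻¹ c) = τ p1 := congrArg τ hcp
    rw [perm_apply_inv_self _, hτp1] at this
    exact hbc this.symm
  have hinvclt : ((τ⁻¹ c : Fin n) : ℕ) < M - 1 := by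
    rcases Nat.lt_or_ge ((τ⁻¹ c : Fin n) : ℕ) (M-1) with h' | h'
    · exact h'
    · exact absurd (Fin.ext (by omega : ((τ⁻¹ c : Fin n) : ℕ) = (p1:ℕ))) hinvcne
  have hxP : twoPoint σ0 p1 p2 b c ∈ Pfix n M σ0 := by
    intro j hj
    have h1 : (τ * swap (τ⁻¹ c) p2) j = τ j :=
      mul_swap_mem_Pfix (m := M) (σ := τ) (by omega) (by omega) j hj
    rw [twoPoint, ← hτ, h1]
    exact hτP j hj
  refine ⟨hxP, ?_, ?_⟩
  · show (τ * swap (τ⁻¹ c) p2) p1 = b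
    rw [Equiv.Perm.mul_apply, Equiv.swap_apply_of_ne_of_ne hinvcne.symm
      (fun hc' => by rw [hc'] at hp1; omega), hτp1]
  · show (τ * swap (τ⁻¹ c) p2) p2 = c
    rw [Equiv.Perm.mul_apply, Equiv.swap_apply_right, perm_apply_inv_self _]

/-- The number of positions `j : Fin n` with `j < M`. -/
lemma card_filter_lt (M : ℕ) (hM : M ≤ n) :
    (Finset.univ.filter (fun j : Fin n => (j:ℕ) < M)).card = M := by
  refine Finset.card_eq_of_bijective (fun i hi => ⟨i, by omega⟩) ?_ ?_ ?_
  · rintro ⟨a, ha⟩ hmem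
    simp only [Finset.mem_filter] at hmem
    exact ⟨a, hmem.2, rfl⟩
  · intro i hi; simp [hi]
  · intro i j hi hj hij
    exact congrArg Fin.val hij

/-- The set of values occupied at positions `< M`. -/
lemma card_vals (σ0 : Equiv.Perm (Fin n)) (M : ℕ) (hM : M ≤ n) :
    (Finset.univ.filter (fun v : Fin n => ((σ0⁻¹ v : Fin n) : ℕ) < M)).card = M := by
  have himg : Finset.univ.filter (fun v : Fin n => ((σ0⁻¹ v : Fin n) : ℕ) < M)
      = Finset.image σ0 (Finset.univ.filter (fun j : Fin n => (j:ℕ) < M)) := by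
    ext v
    simp only [Finset.mem_filter, Finset.mem_image, Finset.mem_univ, true_and]
    constructor
    · intro hv; exact ⟨σ0⁻¹ v, hv, perm_apply_inv_self σ0 v⟩
    · rintro ⟨j, hj, rfl⟩; rwa [perm_inv_apply_self _]
  rw [himg, Finset.card_image_of_injective _ σ0.injective, card_filter_lt M hM]

lemma nat_prod_ineq {a b M : ℕ} (ha : 1 ≤ a) (hb : 1 ≤ b) (hab : a + b = M) :
    M - 1 ≤ a * b := by
  obtain ⟨a', rfl⟩ := Nat.exists_eq_add_of_le ha
  obtain ⟨b', rfl⟩ := Nat.exists_eq_add_of_le hb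
  have : (1 + a') * (1 + b') = 1 + a' + b' + a' * b' := by ring
  omega

/-- membership of values in `Pfix`. -/
lemma mem_vals_of_pfix {σ0 x : Equiv.Perm (Fin n)} {M : ℕ} (hx : x ∈ Pfix n M σ0)
    {j : Fin n} (hj : (j:ℕ) < M) : ((σ0⁻¹ (x j) : Fin n) : ℕ) < M :=
  inv_lt_of_agree (fun k hk => (hx k hk).symm) hj


/-- Main inductive lemma: removing at most `m-2` vertices from a copy of the bubble-sort
graph `B_m` sitting inside `B_n` (as the set of permutations with a fixed suffix from
position `m` on) leaves it connected. -/
lemma lemL (n : ℕ) : ∀ (m : ℕ), 1 ≤ m → m ≤ n →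
    ∀ (σ0 : Equiv.Perm (Fin n)) (S : Set (Equiv.Perm (Fin n))), S.ncard ≤ m - 2 →
    ∀ u ∈ Pfix n m σ0 \ S, ∀ v ∈ Pfix n m σ0 \ S,
      ReachIn (bubbleSortGraph n) (Pfix n m σ0 \ S) u v := by
  intro m
  induction m with
  | zero => omega
  | succ m ih =>
    intro hm1 hmn σ0 S hS u hu v hv
    classical
    rcases Nat.lt_or_ge m 1 with hm0 | hm1'
    · -- base case M = 1
      have hm : m = 0 := by omega
      subst hm
      have hu0 : u = σ0 := perm_eq_of_agree_one (fun j hj => hu.1 j hj)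
      have hv0 : v = σ0 := perm_eq_of_agree_one (fun j hj => hv.1 j hj)
      subst hu0; rw [hv0] at hv ⊢
      exact ReachIn.refl hv
    rcases Nat.lt_or_ge m 2 with hm1'' | hm2
    · -- base case M = 2
      have hm : m = 1 := by omega
      subst hm
      have hSe : S = ∅ := by
        rw [← Set.ncard_eq_zero (Set.toFinite S)]; omega
      subst hSe
      have hagree : ∀ j : Fin n, 2 ≤ (j:ℕ) → u j = v j :=
        fun j hj => (hu.1 j hj).trans (hv.1 j hj).symm
      rcases perm_eq_or_swap (by omega) hagree with h | h
      · subst h; exact ReachIn.refl hu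
      · subst h
        exact ReachIn.of_adj (bs_adj (by norm_num) u) hu hv
    · -- inductive step, M = m+1, m ≥ 2
      have hp1lt : m < n := by omega
      let p1 : Fin n := ⟨m, hp1lt⟩
      let p2 : Fin n := ⟨m - 1, by omega⟩
      have hp1v : (p1:ℕ) = m := rfl
      have hp2v : (p2:ℕ) = m - 1 := rfl
      have hp21 : (p1:ℕ) = (p2:ℕ) + 1 := by omega
      have hS' : S.ncard ≤ m - 1 := by
        have := hS; omega
      -- basic part facts
      have h_part_val : ∀ x z : Equiv.Perm (Fin n), z ∈ Pfix n m x → z p1 = x p1 :=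
        fun x z hz => hz p1 (Nat.le_refl m)
      have h_part_sub : ∀ x ∈ Pfix n (m+1) σ0, Pfix n m x ⊆ Pfix n (m+1) σ0 := by
        intro x hx z hz j hj
        exact (hz j (by omega)).trans (hx j hj)
      have h_same_part : ∀ x ∈ Pfix n (m+1) σ0, ∀ z ∈ Pfix n (m+1) σ0,
          z p1 = x p1 → z ∈ Pfix n m x := by
        intro x hx z hz hzx j hj
        rcases Nat.lt_or_ge (j:ℕ) (m+1) with hj' | hj'
        · have : j = p1 := Fin.ext (by omega)
          rw [this, hzx]
        · exact (hz j hj').trans (hx j hj').symm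
      have h_cross_memP : ∀ x ∈ Pfix n (m+1) σ0, x * swap p2 p1 ∈ Pfix n (m+1) σ0 := by
        intro x hx j hj
        exact (mul_swap_mem_Pfix (m := m+1) (σ := x) (by omega) (by omega) j hj).trans (hx j hj)
      have h_cross_val : ∀ x : Equiv.Perm (Fin n), (x * swap p2 p1) p1 = x p2 := by
        intro x; rw [Equiv.Perm.mul_apply, Equiv.swap_apply_right]
      have h_cross_adj : ∀ x : Equiv.Perm (Fin n),
          (bubbleSortGraph n).Adj x (x * swap p2 p1) := fun x => bs_adj hp21 x
      have hp2ne : p2 ≠ p1 := fun hc => by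
        have := congrArg Fin.val hc; omega
      -- good-part internal reachability
      have good_reach : ∀ x ∈ Pfix n (m+1) σ0, (S ∩ Pfix n m x).ncard ≤ m - 2 →
          ∀ u' ∈ Pfix n m x \ S, ∀ v' ∈ Pfix n m x \ S,
            ReachIn (bubbleSortGraph n) (Pfix n (m+1) σ0 \ S) u' v' := by
        intro x hx hcard u' hu' v' hv'
        have hsub : Pfix n m x \ (S ∩ Pfix n m x) ⊆ Pfix n (m+1) σ0 \ S := by
          rintro z ⟨hz1, hz2⟩
          exact ⟨h_part_sub x hx hz1, fun hc => hz2 ⟨hc, hz1⟩⟩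
        refine ReachIn.mono hsub (ih (by omega) (by omega) x (S ∩ Pfix n m x) hcard
          u' ⟨hu'.1, fun hc => hu'.2 hc.1⟩ v' ⟨hv'.1, fun hc => hv'.2 hc.1⟩)
      by_cases hAG : ∀ x ∈ Pfix n (m+1) σ0, (S ∩ Pfix n m x).ncard ≤ m - 2
      · -- all parts good: counting argument
        by_contra hcon
        set A : Set (Fin n) := {b | ∃ z, (z ∈ Pfix n (m+1) σ0 \ S) ∧ z p1 = b ∧
          ReachIn (bubbleSortGraph n) (Pfix n (m+1) σ0 \ S) u z} with hA
        have reach_of_A : ∀ x, x ∈ Pfix n (m+1) σ0 \ S → x p1 ∈ A →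
            ReachIn (bubbleSortGraph n) (Pfix n (m+1) σ0 \ S) u x := by
          rintro x hx ⟨z, hz, hzp, hr⟩
          have hxz : x ∈ Pfix n m z := h_same_part z hz.1 x hx.1 hzp.symm
          exact hr.trans (good_reach z hz.1 (hAG z hz.1) z ⟨self_mem_Pfix, hz.2⟩ x ⟨hxz, hx.2⟩)
        have huA : u p1 ∈ A := ⟨u, hu, rfl, ReachIn.refl hu⟩
        have hvA : v p1 ∉ A := fun h => hcon (reach_of_A v hv h)
        have closure : ∀ x ∈ Pfix n (m+1) σ0, x p1 ∈ A → x p2 ∉ A →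
            x ∈ S ∨ x * swap p2 p1 ∈ S := by
          intro x hxP hxA hx2A
          by_contra hc
          push_neg at hc
          have hx' : x * swap p2 p1 ∈ Pfix n (m+1) σ0 \ S := ⟨h_cross_memP x hxP, hc.2⟩
          have hr : ReachIn (bubbleSortGraph n) (Pfix n (m+1) σ0 \ S) u (x * swap p2 p1) :=
            (reach_of_A x ⟨hxP, hc.1⟩ hxA).trans
              (ReachIn.of_adj (h_cross_adj x) ⟨hxP, hc.1⟩ hx')
          exact hx2A ⟨x * swap p2 p1, hx', h_cross_val x, hr⟩
        -- counting
        set VF := Finset.univ.filter (fun w : Fin n => ((σ0⁻¹ w : Fin n) : ℕ) < m+1) with hVF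
        have hVFcard : VF.card = m + 1 := card_vals σ0 (m+1) hmn
        set AF := VF.filter (fun w => w ∈ A) with hAF
        set CF := VF.filter (fun w => w ∉ A) with hCF
        have hsplit : AF.card + CF.card = m + 1 := by
          rw [hAF, hCF, Finset.card_filter_add_card_filter_not]
          exact hVFcard
        have hmemVF : ∀ x ∈ Pfix n (m+1) σ0, ∀ j : Fin n, (j:ℕ) < m+1 → x j ∈ VF := by
          intro x hx j hj
          simp only [hVF, Finset.mem_filter, Finset.mem_univ, true_and]
          exact mem_vals_of_pfix hx hj
        have hAne : u p1 ∈ AF := by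
          simp only [hAF, Finset.mem_filter]
          exact ⟨hmemVF u hu.1 p1 (by omega), huA⟩
        have hCne : v p1 ∈ CF := by
          simp only [hCF, Finset.mem_filter]
          exact ⟨hmemVF v hv.1 p1 (by omega), hvA⟩
        set E := Finset.univ.filter (fun x : Equiv.Perm (Fin n) =>
          x ∈ Pfix n (m+1) σ0 ∧ x p1 ∈ A ∧ x p2 ∉ A) with hE
        have hElower : AF.card * CF.card ≤ E.card := by
          have hinj := Finset.card_le_card_of_injOn
            (f := fun bc : Fin n × Fin n => twoPoint σ0 p1 p2 bc.1 bc.2)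
            (s := AF ×ˢ CF) (t := E) ?_ ?_
          · rwa [Finset.card_product] at hinj
          · rintro ⟨b, c⟩ hbc
            rw [Finset.mem_coe, Finset.mem_product] at hbc
            obtain ⟨hb, hc⟩ := hbc
            rw [hAF, Finset.mem_filter, hVF, Finset.mem_filter] at hb
            rw [hCF, Finset.mem_filter, hVF, Finset.mem_filter] at hc
            have hbc' : b ≠ c := fun hcc => hc.2 (hcc ▸ hb.2)
            obtain ⟨hP, hb', hc'⟩ := twoPoint_spec (M := m+1) (p1 := p1) (p2 := p2)
              (by omega) (by rw [hp1v]; omega) (by rw [hp2v]; omega) hb.1.2 hc.1.2 hbc'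
            simp only [hE, Finset.mem_coe, Finset.mem_filter, Finset.mem_univ, true_and]
            exact ⟨hP, hb' ▸ hb.2, hc' ▸ hc.2⟩
          · rintro ⟨b, c⟩ hbc ⟨b', c'⟩ hbc' heq
            rw [Finset.mem_coe, Finset.mem_product] at hbc hbc'
            obtain ⟨hb, hc⟩ := hbc
            obtain ⟨hb', hc'⟩ := hbc'
            rw [hAF, Finset.mem_filter, hVF, Finset.mem_filter] at hb hb'
            rw [hCF, Finset.mem_filter, hVF, Finset.mem_filter] at hc hc'
            have s1 := twoPoint_spec (M := m+1) (n := n) (p1 := p1) (p2 := p2)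
              (by omega) (by rw [hp1v]; omega) (by rw [hp2v]; omega) hb.1.2 hc.1.2
              (fun hcc => hc.2 (hcc ▸ hb.2))
            have s2 := twoPoint_spec (M := m+1) (n := n) (p1 := p1) (p2 := p2)
              (by omega) (by rw [hp1v]; omega) (by rw [hp2v]; omega) hb'.1.2 hc'.1.2
              (fun hcc => hc'.2 (hcc ▸ hb'.2))
            have heq' : twoPoint σ0 p1 p2 b c = twoPoint σ0 p1 p2 b' c' := heq
            have e1 : b = b' := by
              have h := congrArg (fun π : Equiv.Perm (Fin n) => π p1) heq'
              rwa [s1.2.1, s2.2.1] at h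
            have e2 : c = c' := by
              have h := congrArg (fun π : Equiv.Perm (Fin n) => π p2) heq'
              rwa [s1.2.2, s2.2.2] at h
            exact Prod.ext e1 e2
        have hEupper : E.card ≤ m - 1 := by
          have hmaps : ∀ x ∈ E, (if x ∈ S then x else x * swap p2 p1) ∈ S.toFinset := by
            intro x hx
            simp only [hE, Finset.mem_filter, Finset.mem_univ, true_and] at hx
            rcases closure x hx.1 hx.2.1 hx.2.2 with h | h
            · simp [h, Set.mem_toFinset]
            · by_cases hxS : x ∈ S
              · simp [hxS, Set.mem_toFinset]
              · simp [hxS, Set.mem_toFinset, h]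
          have hinj : Set.InjOn (fun x => if x ∈ S then x else x * swap p2 p1) E := by
            intro x hx y hy hxy
            simp only [hE, Finset.mem_coe, Finset.mem_filter, Finset.mem_univ, true_and]
              at hx hy
            by_cases hxS : x ∈ S <;> by_cases hyS : y ∈ S <;>
              simp only [hxS, hyS, if_pos, if_neg, if_true, if_false] at hxy
            · exact hxy
            · exfalso
              have : x p1 = y p2 := by rw [hxy, h_cross_val]
              exact hy.2.2 (this ▸ hx.2.1)
            · exfalso
              have : y p1 = x p2 := by rw [← hxy, h_cross_val]
              exact hx.2.2 (this ▸ hy.2.1)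
            · exact mul_right_cancel hxy
          calc E.card ≤ S.toFinset.card := Finset.card_le_card_of_injOn _ hmaps hinj
            _ = S.ncard := (Set.ncard_eq_toFinset_card' S).symm
            _ ≤ m - 1 := hS'
        have h1A : 1 ≤ AF.card := Finset.card_pos.2 ⟨_, hAne⟩
        have h1C : 1 ≤ CF.card := Finset.card_pos.2 ⟨_, hCne⟩
        have hprod := nat_prod_ineq h1A h1C hsplit
        omega
      · -- one bad part: it contains all of S
        push_neg at hAG
        obtain ⟨x0, hx0P, hx0⟩ := hAG
        have hle : (S ∩ Pfix n m x0).ncard ≤ S.ncard :=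
          Set.ncard_le_ncard Set.inter_subset_left (Set.toFinite S)
        have heq : S ∩ Pfix n m x0 = S :=
          Set.eq_of_subset_of_ncard_le Set.inter_subset_left (by omega) (Set.toFinite S)
        have hSval : ∀ s ∈ S, s p1 = x0 p1 := by
          intro s hs
          rw [← heq] at hs
          exact h_part_val x0 s hs.2
        have empty_part : ∀ x : Equiv.Perm (Fin n), x p1 ≠ x0 p1 →
            (S ∩ Pfix n m x).ncard ≤ m - 2 := by
          intro x hx
          have : S ∩ Pfix n m x = ∅ := by
            ext s
            simp only [Set.mem_inter_iff, Set.mem_empty_iff_false, iff_false, not_and]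
            intro hs1 hs2
            exact hx ((h_part_val x s hs2) ▸ (hSval s hs1))
          rw [this, Set.ncard_empty]
          omega
        have escape : ∀ w ∈ Pfix n (m+1) σ0 \ S, ∃ w',
            (w' ∈ Pfix n (m+1) σ0 \ S) ∧ w' p1 ≠ x0 p1 ∧
            ReachIn (bubbleSortGraph n) (Pfix n (m+1) σ0 \ S) w w' := by
          intro w hw
          by_cases hq : w p1 = x0 p1
          · have hkey : (w * swap p2 p1) p1 ≠ x0 p1 := by
              rw [h_cross_val, ← hq]
              intro hc
              exact hp2ne (w.injective hc)
            have hwS : w * swap p2 p1 ∉ S := fun hc => hkey (hSval _ hc)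
            refine ⟨w * swap p2 p1, ⟨h_cross_memP w hw.1, hwS⟩, hkey, ?_⟩
            exact ReachIn.of_adj (h_cross_adj w) hw ⟨h_cross_memP w hw.1, hwS⟩
          · exact ⟨w, hw, hq, ReachIn.refl hw⟩
        have conn_out : ∀ w ∈ Pfix n (m+1) σ0 \ S, w p1 ≠ x0 p1 →
            ∀ y ∈ Pfix n (m+1) σ0 \ S, y p1 ≠ x0 p1 →
            ReachIn (bubbleSortGraph n) (Pfix n (m+1) σ0 \ S) w y := by
          intro w hw hwne y hy hyne
          by_cases hsame : y p1 = w p1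
          · exact good_reach w hw.1 (empty_part w hwne) w ⟨self_mem_Pfix, hw.2⟩
              y ⟨h_same_part w hw.1 y hy.1 hsame, hy.2⟩
          · have hagree : ∀ j : Fin n, m + 1 ≤ (j:ℕ) → w j = y j :=
              fun j hj => (hw.1 j hj).trans (hy.1 j hj).symm
            have hinv : ((w⁻¹ (y p1) : Fin n) : ℕ) < m + 1 :=
              inv_lt_of_agree hagree (by omega)
            have hinvne : w⁻¹ (y p1) ≠ p1 := by
              intro hc
              have := congrArg w hc
              rw [perm_apply_inv_self _] at this
              exact hsame this
            have hinvlt : ((w⁻¹ (y p1) : Fin n) : ℕ) < m := by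
              rcases Nat.lt_or_ge ((w⁻¹ (y p1) : Fin n) : ℕ) m with h' | h'
              · exact h'
              · exact absurd (Fin.ext (by omega : ((w⁻¹ (y p1) : Fin n):ℕ) = (p1:ℕ))) hinvne
            have hzPm : w * swap (w⁻¹ (y p1)) p2 ∈ Pfix n m w :=
              mul_swap_mem_Pfix hinvlt (by omega)
            have hzp1 : (w * swap (w⁻¹ (y p1)) p2) p1 = w p1 := by
              rw [Equiv.Perm.mul_apply, Equiv.swap_apply_of_ne_of_ne hinvne.symm hp2ne.symm]
            have hzp2 : (w * swap (w⁻¹ (y p1)) p2) p2 = y p1 := by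
              rw [Equiv.Perm.mul_apply, Equiv.swap_apply_right, perm_apply_inv_self _]
            have hzP : w * swap (w⁻¹ (y p1)) p2 ∈ Pfix n (m+1) σ0 :=
              h_part_sub w hw.1 hzPm
            have hzS : w * swap (w⁻¹ (y p1)) p2 ∉ S := by
              intro hc
              exact hwne (hzp1 ▸ hSval _ hc)
            have r1 := good_reach w hw.1 (empty_part w hwne) w ⟨self_mem_Pfix, hw.2⟩
              (w * swap (w⁻¹ (y p1)) p2) ⟨hzPm, hzS⟩
            have hz'P : (w * swap (w⁻¹ (y p1)) p2) * swap p2 p1 ∈ Pfix n (m+1) σ0 :=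
              h_cross_memP _ hzP
            have hz'p1 : ((w * swap (w⁻¹ (y p1)) p2) * swap p2 p1) p1 = y p1 := by
              rw [h_cross_val, hzp2]
            have hz'S : (w * swap (w⁻¹ (y p1)) p2) * swap p2 p1 ∉ S := by
              intro hc
              exact hyne (hz'p1 ▸ hSval _ hc)
            have r2 := ReachIn.of_adj (A := Pfix n (m+1) σ0 \ S)
              (h_cross_adj (w * swap (w⁻¹ (y p1)) p2)) ⟨hzP, hzS⟩ ⟨hz'P, hz'S⟩
            have hz'm : (w * swap (w⁻¹ (y p1)) p2) * swap p2 p1 ∈ Pfix n m y :=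
              h_same_part y hy.1 _ hz'P hz'p1
            have r3 := good_reach y hy.1 (empty_part y hyne)
              ((w * swap (w⁻¹ (y p1)) p2) * swap p2 p1) ⟨hz'm, hz'S⟩
              y ⟨self_mem_Pfix, hy.2⟩
            exact (r1.trans r2).trans r3
        obtain ⟨w1, hw1, hne1, r1⟩ := escape u hu
        obtain ⟨w2, hw2, hne2, r2⟩ := escape v hv
        exact (r1.trans (conn_out w1 hw1 hne1 w2 hw2 hne2)).trans r2.symm

/-- Top-level lemma: removing at most `n-3` vertices from the subgraph of `B_n` induced by
the union of parts `V_i`, `i ∈ I`, leaves it connected. -/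
lemma lemM (n : ℕ) (hn : 3 ≤ n) (I : Set (Fin n)) (p1 p2 : Fin n)
    (hp1 : (p1:ℕ) = n - 1) (hp2 : (p2:ℕ) = n - 2)
    (S : Set (Equiv.Perm (Fin n))) (hS : S.ncard + 3 ≤ n) :
    ∀ u ∈ {σ : Equiv.Perm (Fin n) | σ p1 ∈ I} \ S,
    ∀ v ∈ {σ : Equiv.Perm (Fin n) | σ p1 ∈ I} \ S,
      ReachIn (bubbleSortGraph n) ({σ : Equiv.Perm (Fin n) | σ p1 ∈ I} \ S) u v := by
  intro u hu v hv
  classical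
  set U : Set (Equiv.Perm (Fin n)) := {σ | σ p1 ∈ I} with hU
  have hp21 : (p1:ℕ) = (p2:ℕ) + 1 := by omega
  have h_part_val : ∀ x z : Equiv.Perm (Fin n), z ∈ Pfix n (n-1) x → z p1 = x p1 :=
    fun x z hz => hz p1 (by omega)
  have h_same_part : ∀ x z : Equiv.Perm (Fin n), z p1 = x p1 → z ∈ Pfix n (n-1) x := by
    intro x z hzx j hj
    have : j = p1 := Fin.ext (by omega)
    rw [this, hzx]
  have h_cross_val : ∀ x : Equiv.Perm (Fin n), (x * swap p2 p1) p1 = x p2 := by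
    intro x; rw [Equiv.Perm.mul_apply, Equiv.swap_apply_right]
  have h_cross_adj : ∀ x : Equiv.Perm (Fin n),
      (bubbleSortGraph n).Adj x (x * swap p2 p1) := fun x => bs_adj hp21 x
  have good_reach : ∀ x ∈ U, ∀ u' ∈ Pfix n (n-1) x \ S, ∀ v' ∈ Pfix n (n-1) x \ S,
      ReachIn (bubbleSortGraph n) (U \ S) u' v' := by
    intro x hx u' hu' v' hv'
    have hcard : (S ∩ Pfix n (n-1) x).ncard ≤ n - 1 - 2 := by
      have := Set.ncard_le_ncard (Set.inter_subset_left (s := S) (t := Pfix n (n-1) x))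
        (Set.toFinite S)
      omega
    have hsub : Pfix n (n-1) x \ (S ∩ Pfix n (n-1) x) ⊆ U \ S := by
      rintro z ⟨hz1, hz2⟩
      refine ⟨?_, fun hc => hz2 ⟨hc, hz1⟩⟩
      rw [hU, Set.mem_setOf_eq, h_part_val x z hz1]
      exact hx
    exact ReachIn.mono hsub (lemL n (n-1) (by omega) (by omega) x (S ∩ Pfix n (n-1) x) hcard
      u' ⟨hu'.1, fun hc => hu'.2 hc.1⟩ v' ⟨hv'.1, fun hc => hv'.2 hc.1⟩)
  by_contra hcon
  set A : Set (Fin n) := {b | ∃ z, (z ∈ U \ S) ∧ z p1 = b ∧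
    ReachIn (bubbleSortGraph n) (U \ S) u z} with hA
  have reach_of_A : ∀ x, x ∈ U \ S → x p1 ∈ A →
      ReachIn (bubbleSortGraph n) (U \ S) u x := by
    rintro x hx ⟨z, hz, hzp, hr⟩
    exact hr.trans (good_reach z hz.1 z ⟨self_mem_Pfix, hz.2⟩
      x ⟨h_same_part z x (hzp.symm ▸ rfl), hx.2⟩)
  have huA : u p1 ∈ A := ⟨u, hu, rfl, ReachIn.refl hu⟩
  have hvA : v p1 ∉ A := fun h => hcon (reach_of_A v hv h)
  have closure : ∀ x : Equiv.Perm (Fin n), x p1 ∈ I → x p1 ∈ A → x p2 ∈ I → x p2 ∉ A →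
      x ∈ S ∨ x * swap p2 p1 ∈ S := by
    intro x hxI hxA hx2I hx2A
    by_contra hc
    push_neg at hc
    have hx'U : x * swap p2 p1 ∈ U := by
      rw [hU, Set.mem_setOf_eq, h_cross_val]
      exact hx2I
    have hx' : x * swap p2 p1 ∈ U \ S := ⟨hx'U, hc.2⟩
    have hr : ReachIn (bubbleSortGraph n) (U \ S) u (x * swap p2 p1) :=
      (reach_of_A x ⟨hxI, hc.1⟩ hxA).trans
        (ReachIn.of_adj (h_cross_adj x) ⟨hxI, hc.1⟩ hx')
    exact hx2A ⟨x * swap p2 p1, hx', h_cross_val x, hr⟩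
  -- counting
  set AF := Finset.univ.filter (fun b : Fin n => b ∈ I ∧ b ∈ A) with hAF
  set CF := Finset.univ.filter (fun b : Fin n => b ∈ I ∧ b ∉ A) with hCF
  set JF := Finset.univ.filter (fun j : Fin n => (j:ℕ) < n - 2) with hJF
  have hJFcard : JF.card = n - 2 := card_filter_lt (n-2) (by omega)
  have hAne : u p1 ∈ AF := by
    simp only [hAF, Finset.mem_filter, Finset.mem_univ, true_and]
    exact ⟨hu.1, huA⟩
  have hCne : v p1 ∈ CF := by
    simp only [hCF, Finset.mem_filter, Finset.mem_univ, true_and]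
    exact ⟨hv.1, hvA⟩
  set E := Finset.univ.filter (fun x : Equiv.Perm (Fin n) =>
    x p1 ∈ I ∧ x p1 ∈ A ∧ x p2 ∈ I ∧ x p2 ∉ A) with hE
  set z0 : Fin n := ⟨0, by omega⟩ with hz0
  have hElower : AF.card * CF.card * (n - 2) ≤ E.card := by
    have hinj := Finset.card_le_card_of_injOn
      (f := fun bcj : (Fin n × Fin n) × Fin n =>
        twoPoint 1 p1 p2 bcj.1.1 bcj.1.2 * swap bcj.2 z0)
      (s := (AF ×ˢ CF) ×ˢ JF) (t := E) ?_ ?_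
    · rwa [Finset.card_product, Finset.card_product, hJFcard] at hinj
    · rintro ⟨⟨b, c⟩, j⟩ hbcj
      simp only [Finset.mem_coe, Finset.mem_product] at hbcj
      obtain ⟨⟨hb, hc⟩, hj⟩ := hbcj
      rw [hAF, Finset.mem_filter] at hb
      rw [hCF, Finset.mem_filter] at hc
      rw [hJF, Finset.mem_filter] at hj
      have hjlt : (j:ℕ) < n - 2 := hj.2
      have hbc' : b ≠ c := fun hcc => hc.2.2 (hcc ▸ hb.2.2)
      obtain ⟨hP, hb', hc'⟩ := twoPoint_spec (M := n) (σ0 := 1) (p1 := p1) (p2 := p2)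
        (by omega) (by omega) (by omega) (by simp) (by simp) hbc'
      have hval1 : (twoPoint 1 p1 p2 b c * swap j z0) p1 = b := by
        rw [Equiv.Perm.mul_apply, Equiv.swap_apply_of_ne_of_ne
          (fun hcc => by rw [hcc] at hp1; omega)
          (fun hcc => by have := congrArg Fin.val hcc; rw [hz0] at this; simp at this; omega),
          hb']
      have hval2 : (twoPoint 1 p1 p2 b c * swap j z0) p2 = c := by
        rw [Equiv.Perm.mul_apply, Equiv.swap_apply_of_ne_of_ne
          (fun hcc => by rw [hcc] at hp2; omega)
          (fun hcc => by have := congrArg Fin.val hcc; rw [hz0] at this; simp at this; omega),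
          hc']
      simp only [hE, Finset.mem_coe, Finset.mem_filter, Finset.mem_univ, true_and]
      rw [hval1, hval2]
      exact ⟨hb.2.1, hb.2.2, hc.2.1, hc.2.2⟩
    · rintro ⟨⟨b, c⟩, j⟩ hbcj ⟨⟨b', c'⟩, j'⟩ hbcj' heq
      simp only [Finset.mem_coe, Finset.mem_product] at hbcj hbcj'
      obtain ⟨⟨hb, hc⟩, hj⟩ := hbcj
      obtain ⟨⟨hb', hc'⟩, hj'⟩ := hbcj'
      rw [hAF, Finset.mem_filter] at hb hb'
      rw [hCF, Finset.mem_filter] at hc hc'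
      rw [hJF, Finset.mem_filter] at hj hj'
      have hjlt : (j:ℕ) < n - 2 := hj.2
      have hjlt' : (j':ℕ) < n - 2 := hj'.2
      have s1 := twoPoint_spec (M := n) (σ0 := (1 : Equiv.Perm (Fin n))) (p1 := p1) (p2 := p2)
        (b := b) (c := c) (by omega) (by omega) (by omega) (by simp) (by simp)
        (fun hcc => hc.2.2 (hcc ▸ hb.2.2))
      have s2 := twoPoint_spec (M := n) (σ0 := (1 : Equiv.Perm (Fin n))) (p1 := p1) (p2 := p2)
        (b := b') (c := c') (by omega) (by omega) (by omega) (by simp) (by simp)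
        (fun hcc => hc'.2.2 (hcc ▸ hb'.2.2))
      have heq' : twoPoint 1 p1 p2 b c * swap j z0 = twoPoint 1 p1 p2 b' c' * swap j' z0 := heq
      have hv1 : ∀ (bb cc : Fin n) (jj : Fin n), (jj:ℕ) < n - 2 →
          (twoPoint 1 p1 p2 bb cc * swap jj z0) p1 = twoPoint 1 p1 p2 bb cc p1 := by
        intro bb cc jj hjj
        rw [Equiv.Perm.mul_apply, Equiv.swap_apply_of_ne_of_ne
          (fun hcc => by rw [hcc] at hp1; omega)
          (fun hcc => by have := congrArg Fin.val hcc; rw [hz0] at this; simp at this; omega)]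
      have hv2 : ∀ (bb cc : Fin n) (jj : Fin n), (jj:ℕ) < n - 2 →
          (twoPoint 1 p1 p2 bb cc * swap jj z0) p2 = twoPoint 1 p1 p2 bb cc p2 := by
        intro bb cc jj hjj
        rw [Equiv.Perm.mul_apply, Equiv.swap_apply_of_ne_of_ne
          (fun hcc => by rw [hcc] at hp2; omega)
          (fun hcc => by have := congrArg Fin.val hcc; rw [hz0] at this; simp at this; omega)]
      have e1 : b = b' := by
        have h := congrArg (fun π : Equiv.Perm (Fin n) => π p1) heq'
        rwa [hv1 b c j hjlt, hv1 b' c' j' hjlt', s1.2.1, s2.2.1] at h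
      have e2 : c = c' := by
        have h := congrArg (fun π : Equiv.Perm (Fin n) => π p2) heq'
        rwa [hv2 b c j hjlt, hv2 b' c' j' hjlt', s1.2.2, s2.2.2] at h
      have e3 : j = j' := by
        rw [e1, e2] at heq'
        have := mul_left_cancel heq'
        have h := congrArg (fun π : Equiv.Perm (Fin n) => π z0) this
        simpa [Equiv.swap_apply_right] using h
      rw [e1, e2, e3]
  have hEupper : E.card ≤ n - 3 := by
    have hmaps : ∀ x ∈ E, (if x ∈ S then x else x * swap p2 p1) ∈ S.toFinset := by
      intro x hx
      simp only [hE, Finset.mem_filter, Finset.mem_univ, true_and] at hx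
      rcases closure x hx.1 hx.2.1 hx.2.2.1 hx.2.2.2 with h | h
      · simp [h, Set.mem_toFinset]
      · by_cases hxS : x ∈ S
        · simp [hxS, Set.mem_toFinset]
        · simp [hxS, Set.mem_toFinset, h]
    have hinj : Set.InjOn (fun x => if x ∈ S then x else x * swap p2 p1) E := by
      intro x hx y hy hxy
      simp only [hE, Finset.mem_coe, Finset.mem_filter, Finset.mem_univ, true_and]
        at hx hy
      by_cases hxS : x ∈ S <;> by_cases hyS : y ∈ S <;>
        simp only [hxS, hyS, if_pos, if_neg, if_true, if_false] at hxy
      · exact hxy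
      · exfalso
        have : x p1 = y p2 := by rw [hxy, h_cross_val]
        exact hy.2.2.2 (this ▸ hx.2.1)
      · exfalso
        have : y p1 = x p2 := by rw [← hxy, h_cross_val]
        exact hx.2.2.2 (this ▸ hy.2.1)
      · exact mul_right_cancel hxy
    calc E.card ≤ S.toFinset.card := Finset.card_le_card_of_injOn _ hmaps hinj
      _ = S.ncard := (Set.ncard_eq_toFinset_card' S).symm
      _ ≤ n - 3 := by omega
  have h1A : 1 ≤ AF.card := Finset.card_pos.2 ⟨_, hAne⟩
  have h1C : 1 ≤ CF.card := Finset.card_pos.2 ⟨_, hCne⟩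
  have hfin : n - 2 ≤ AF.card * CF.card * (n - 2) := by
    calc n - 2 = 1 * 1 * (n - 2) := by ring
    _ ≤ AF.card * CF.card * (n - 2) :=
      Nat.mul_le_mul (Nat.mul_le_mul h1A h1C) (Nat.le_refl _)
  omega

/-- Lower bound on the size of a part `V_i`. -/
lemma card_U_lower (n : ℕ) (hn : 3 ≤ n) (I : Set (Fin n)) (p1 : Fin n)
    (hp1 : (p1:ℕ) = n - 1) (i0 : Fin n) (hi0 : i0 ∈ I) :
    n - 1 ≤ ({σ : Equiv.Perm (Fin n) | σ p1 ∈ I}).ncard := by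
  classical
  set z0 : Fin n := ⟨0, by omega⟩ with hz0
  set JF := Finset.univ.filter (fun j : Fin n => (j:ℕ) < n - 1) with hJF
  have hJFcard : JF.card = n - 1 := card_filter_lt (n-1) (by omega)
  rw [Set.ncard_eq_toFinset_card']
  rw [← hJFcard]
  apply Finset.card_le_card_of_injOn (f := fun j => swap i0 p1 * swap j z0)
  · intro j hj
    rw [Finset.mem_coe, Finset.mem_filter] at hj
    have hne1 : p1 ≠ j := fun hcc => by rw [hcc] at hp1; omega
    have hne2 : p1 ≠ z0 := fun hcc => by
      have := congrArg Fin.val hcc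
      rw [hz0] at this; simp at this; omega
    rw [Finset.mem_coe, Set.mem_toFinset, Set.mem_setOf_eq, Equiv.Perm.mul_apply,
      Equiv.swap_apply_of_ne_of_ne hne1 hne2, Equiv.swap_apply_right]
    exact hi0
  · intro j hj j' hj' heq
    have h := congrArg (fun π : Equiv.Perm (Fin n) => π z0) heq
    simp only [Equiv.Perm.mul_apply, Equiv.swap_apply_right] at h
    exact (Equiv.injective _) h

variable {n : ℕ}

theorem main_aux (n : ℕ) (hn : 3 ≤ n) (I : Set (Fin n))
    (hI : I.Nonempty) (hIproper : I ≠ Set.univ) (hpos : 0 < n) :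
    vertexConnectivity ((bubbleSortGraph n).induce (⋃ i ∈ I, Vpart n hpos i)) = n - 2 := by
  classical
  set p1 : Fin n := ⟨n - 1, Nat.sub_lt hpos Nat.one_pos⟩ with hp1def
  set p2 : Fin n := ⟨n - 2, by omega⟩ with hp2def
  have hp1v : (p1:ℕ) = n - 1 := rfl
  have hp2v : (p2:ℕ) = n - 2 := rfl
  have hUeq : (⋃ i ∈ I, Vpart n hpos i) = {σ : Equiv.Perm (Fin n) | σ p1 ∈ I} := by
    ext σ
    simp only [Set.mem_iUnion, Set.mem_setOf_eq, Vpart, hp1def]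
    constructor
    · rintro ⟨i, hi, h⟩; exact h ▸ hi
    · intro h; exact ⟨σ p1, h, rfl⟩
  rw [hUeq]
  set U : Set (Equiv.Perm (Fin n)) := {σ : Equiv.Perm (Fin n) | σ p1 ∈ I} with hUdef
  obtain ⟨i0, hi0⟩ := hI
  obtain ⟨j0, hj0⟩ := (Set.ne_univ_iff_exists_notMem I).1 hIproper
  have hij0 : i0 ≠ j0 := fun h => hj0 (h ▸ hi0)
  -- the special vertex σ with σ(p1) = i0 ∈ I and σ(p2) = j0 ∉ I
  obtain ⟨-, hσp1, hσp2⟩ := twoPoint_spec (n := n) (M := n) (σ0 := 1) (p1 := p1) (p2 := p2)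
    (b := i0) (c := j0) (by omega) (by omega) (by omega) (by simp) (by simp) hij0
  set σ : Equiv.Perm (Fin n) := twoPoint 1 p1 p2 i0 j0 with hσdef
  have hσU : σ ∈ U := by rw [hUdef, Set.mem_setOf_eq, hσp1]; exact hi0
  -- the cut set
  set S : Set ↥U := {x | ∃ i j : Fin n, (j:ℕ) = (i:ℕ) + 1 ∧ (i:ℕ) < n - 2 ∧
    (x : Equiv.Perm (Fin n)) = σ * swap i j} with hSdef
  have hmemS : ∀ (k : ℕ) (hk : k < n - 2), (σ * swap ⟨k, by omega⟩ ⟨k+1, by omega⟩ : Equiv.Perm (Fin n)) ∈ U := by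
    intro k hk
    rw [hUdef, Set.mem_setOf_eq, Equiv.Perm.mul_apply,
      Equiv.swap_apply_of_ne_of_ne (fun hcc => by have := congrArg Fin.val hcc; simp [hp1v] at this; omega)
        (fun hcc => by have := congrArg Fin.val hcc; simp [hp1v] at this; omega), hσp1]
    exact hi0
  have hScard : S.ncard = n - 2 := by
    rw [Set.ncard_eq_toFinset_card']
    apply Finset.card_eq_of_bijective
      (f := fun k hk => (⟨σ * swap ⟨k, by omega⟩ ⟨k+1, by omega⟩, hmemS k hk⟩ : ↥U))
    · intro x hx
      rw [Set.mem_toFinset, hSdef, Set.mem_setOf_eq] at hx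
      obtain ⟨i, j, hij, hilt, hx⟩ := hx
      have hkn : (i:ℕ) < n := i.isLt
      have hkn' : (i:ℕ)+1 < n := by omega
      have h1 : (⟨(i:ℕ), hkn⟩ : Fin n) = i := Fin.ext rfl
      have h2 : (⟨(i:ℕ)+1, hkn'⟩ : Fin n) = j := Fin.ext (by simp; omega)
      have hval : σ * swap (⟨(i:ℕ), hkn⟩ : Fin n) ⟨(i:ℕ)+1, hkn'⟩
          = (x : Equiv.Perm (Fin n)) := by rw [h1, h2, ← hx]
      exact ⟨(i:ℕ), hilt, Subtype.ext hval⟩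
    · intro k hk
      rw [Set.mem_toFinset, hSdef, Set.mem_setOf_eq]
      exact ⟨⟨k, by omega⟩, ⟨k+1, by omega⟩, rfl, hk, rfl⟩
    · intro k k' hk hk' heq
      have hkn : k < n := by omega
      have hkn' : k + 1 < n := by omega
      have hk2n : k' < n := by omega
      have hk2n' : k' + 1 < n := by omega
      have hval : σ * swap (⟨k, hkn⟩ : Fin n) ⟨k+1, hkn'⟩
          = σ * swap (⟨k', hk2n⟩ : Fin n) ⟨k'+1, hk2n'⟩ := congrArg Subtype.val heq
      have hsw : swap (⟨k, hkn⟩ : Fin n) ⟨k+1, hkn'⟩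
          = swap (⟨k', hk2n⟩ : Fin n) ⟨k'+1, hk2n'⟩ := mul_left_cancel hval
      have h1 : swap (⟨k', hk2n⟩ : Fin n) ⟨k'+1, hk2n'⟩ ⟨k, hkn⟩ = ⟨k+1, hkn'⟩ := by
        rw [← hsw, Equiv.swap_apply_left]
      by_contra hne
      have hne1 : (⟨k, hkn⟩ : Fin n) ≠ ⟨k', hk2n⟩ :=
        fun hcc => hne (by have := congrArg Fin.val hcc; simpa using this)
      by_cases hc2 : (⟨k, hkn⟩ : Fin n) = ⟨k'+1, hk2n'⟩
      · rw [hc2, Equiv.swap_apply_right] at h1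
        have h3 : (k' : ℕ) = k + 1 := by simpa using congrArg Fin.val h1
        have h4 : (k : ℕ) = k' + 1 := by simpa using congrArg Fin.val hc2
        omega
      · rw [Equiv.swap_apply_of_ne_of_ne hne1 hc2] at h1
        have h3 : (k : ℕ) = k + 1 := by simpa using congrArg Fin.val h1
        omega
  have hmem : ∃ T : Set ↥U, T.ncard = n - 2 ∧
      (¬ (((bubbleSortGraph n).induce U).induce Tᶜ).Connected ∨ (Tᶜ : Set ↥U).ncard ≤ 1) := by
    refine ⟨S, hScard, ?_⟩
    by_cases hc1 : (Sᶜ : Set ↥U).ncard ≤ 1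
    · exact Or.inr hc1
    · left
      intro hconn
      have hσS : (⟨σ, hσU⟩ : ↥U) ∉ S := by
        rintro ⟨i, j, hij, hilt, hx⟩
        simp only at hx
        have : swap i j = 1 := by
          have := congrArg (fun π => σ⁻¹ * π) hx
          simpa [mul_assoc] using this.symm
        rw [Equiv.swap_eq_one_iff] at this
        exact absurd (congrArg Fin.val this) (by omega)
      push_neg at hc1
      obtain ⟨a, b, ha, hb, hab⟩ := (Set.one_lt_ncard_iff (Set.toFinite _)).1 hc1
      have hy : ∃ y, y ∈ (Sᶜ : Set ↥U) ∧ y ≠ ⟨σ, hσU⟩ := by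
        by_cases hca : a = ⟨σ, hσU⟩
        · exact ⟨b, hb, fun hcb => hab (hca.trans hcb.symm)⟩
        · exact ⟨a, ha, hca⟩
      obtain ⟨y, hyS, hyne⟩ := hy
      have hreach := hconn.preconnected ⟨⟨σ, hσU⟩, hσS⟩ ⟨y, hyS⟩
      obtain ⟨w⟩ := hreach
      have hnn : ¬ w.Nil := SimpleGraph.Walk.not_nil_of_ne
        (fun hcc => hyne (congrArg Subtype.val hcc).symm)
      have hadj := w.adj_snd hnn
      have hBadj : (bubbleSortGraph n).Adj σ
          (((w.getVert 1 : ↥(Sᶜ : Set ↥U)) : ↥U) : Equiv.Perm (Fin n)) := hadj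
      rw [bs_adj_iff] at hBadj
      obtain ⟨hne, i, j, hij, hzval⟩ := hBadj
      have hjlt : (j:ℕ) < n := j.isLt
      rcases Nat.lt_or_ge (i:ℕ) (n-2) with hilt | hige
      · -- the second vertex is in S, contradiction
        exact (w.getVert 1).2 ⟨i, j, hij, hilt, hzval⟩
      · -- i = p2, j = p1 : the second vertex leaves U, contradiction
        have hip2 : i = p2 := Fin.ext (by simp [hp2v]; omega)
        have hjp1 : j = p1 := Fin.ext (by simp [hp1v]; omega)
        have hj0' : (((w.getVert 1 : ↥(Sᶜ : Set ↥U)) : ↥U) : Equiv.Perm (Fin n)) p1 = j0 := by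
          rw [hzval, hip2, hjp1, Equiv.Perm.mul_apply, Equiv.swap_apply_right, hσp2]
        have hzI : (((w.getVert 1 : ↥(Sᶜ : Set ↥U)) : ↥U) : Equiv.Perm (Fin n)) p1 ∈ I :=
          ((w.getVert 1 : ↥(Sᶜ : Set ↥U)) : ↥U).2
        rw [hj0'] at hzI
        exact hj0 hzI
  rw [vertexConnectivity]
  refine le_antisymm (Nat.sInf_le ?_) (le_csInf ?_ ?_)
  · obtain ⟨T, hT1, hT2⟩ := hmem
    exact ⟨T, hT1, hT2⟩
  · obtain ⟨T, hT1, hT2⟩ := hmem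
    exact ⟨n - 2, T, hT1, hT2⟩
  · -- lower bound
    rintro k ⟨S, hcard, hdisj⟩
    by_contra hlt
    push_neg at hlt
    have hk3 : k ≤ n - 3 := by omega
    set S₀ : Set (Equiv.Perm (Fin n)) := Subtype.val '' S with hS₀def
    have hS₀card : S₀.ncard = k := by
      rw [hS₀def, Set.ncard_image_of_injective S Subtype.val_injective]; exact hcard
    have hS₀sub : S₀ ⊆ U := by rintro x ⟨s, hs, rfl⟩; exact s.2
    have himg : Subtype.val '' (Sᶜ : Set ↥U) = U \ S₀ := by
      ext x
      constructor
      · rintro ⟨y, hy, rfl⟩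
        exact ⟨y.2, fun hc => by
          obtain ⟨s, hs, hsval⟩ := hc
          exact hy (Subtype.ext hsval ▸ hs)⟩
      · rintro ⟨hxU, hxS⟩
        exact ⟨⟨x, hxU⟩, fun hc => hxS ⟨⟨x, hxU⟩, hc, rfl⟩, rfl⟩
    have hUcard : n - 1 ≤ U.ncard := card_U_lower n hn I p1 hp1v i0 hi0
    have hSc2 : 2 ≤ (Sᶜ : Set ↥U).ncard := by
      have h1 : (Sᶜ : Set ↥U).ncard = (U \ S₀).ncard := by
        rw [← himg, Set.ncard_image_of_injective _ Subtype.val_injective]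
      rw [h1, Set.ncard_diff hS₀sub (Set.toFinite S₀)]
      omega
    rcases hdisj with hdisc | hsmall
    swap
    · omega
    -- now show connectivity, contradiction
    apply hdisc
    have hreach := lemM n hn I p1 p2 hp1v hp2v S₀ (by omega)
    have hconn0 : ((bubbleSortGraph n).induce (U \ S₀)).Connected := by
      apply connected_induce_of_reachIn
      · apply Set.nonempty_of_ncard_ne_zero
        rw [Set.ncard_diff hS₀sub (Set.toFinite S₀)]
        omega
      · intro u hu v hv
        exact hreach u hu v hv
    refine hconn0.map
      ⟨fun x => ⟨⟨x.val, x.2.1⟩, fun hc => x.2.2 ⟨⟨x.val, x.2.1⟩, hc, rfl⟩⟩,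
        fun {a b} h => h⟩ ?_
    rintro ⟨⟨y, hyU⟩, hyS⟩
    refine ⟨⟨y, hyU, fun hc => ?_⟩, rfl⟩
    obtain ⟨s, hs, hsval⟩ := hc
    have hseq : s = (⟨y, hyU⟩ : ↥U) := Subtype.ext hsval
    exact hyS (hseq ▸ hs)
end BSAux

/-- For `n ≥ 3` and a nonempty proper subset `I` of `[n]`, the vertex connectivity of the
subgraph of the bubble-sort graph `B_n` induced by `⋃ i ∈ I, V_i` equals `n - 2`. -/
theorem vertexConnectivity_induce_iUnion_Vpart (n : ℕ) (hn : 3 ≤ n) (I : Set (Fin n))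
    (hI : I.Nonempty) (hIproper : I ≠ Set.univ) :
    vertexConnectivity ((bubbleSortGraph n).induce (⋃ i ∈ I, Vpart n (by omega) i)) = n - 2 := by
  exact BSAux.main_aux n hn I hI hIproper (by omega)
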